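/- arXiv:1702.04482 — 8 statements merged into one kernel-verified Lean document; each statement's English description precedes it below -/
import Mathlib

section
/- Let X be a Hausdorff Baire space, Y a topological space, and f : X → Y a map whose graph is σ-compact (a countable union of compact subsets of X × Y). Then there exists a dense open subset U of X such that f is continuous at every point of U. -/
theorem stmt_0 {X Y : Type*} [TopologicalSpace X] [T2Space X] [BaireSpace X]
    [TopologicalSpace Y] (f : X → Y)
    (h : ∃ K : ℕ → Set (X × Y), (∀ n, IsCompact (K n)) ∧
      {q : X × Y | q.2 = f q.1} = ⋃ n, K n) :
    ∃ U : Set X, IsOpen U ∧ Dense U ∧ ∀ x ∈ U, ContinuousAt f x := by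
  obtain ⟨K, hKc, hKg⟩ := h
  set A : ℕ → Set X := fun n => Prod.fst '' K n with hA
  have hAc : ∀ n, IsClosed (A n) := fun n => ((hKc n).image continuous_fst).isClosed
  have hgraph : ∀ n, ∀ p ∈ K n, p.2 = f p.1 := fun n p hp => by
    have : p ∈ {q : X × Y | q.2 = f q.1} := hKg ▸ Set.mem_iUnion.2 ⟨n, hp⟩
    exact this
  have hcover : (⋃ n, A n) = Set.univ := by
    ext x
    simp only [Set.mem_iUnion, Set.mem_univ, iff_true]
    have hx : (x, f x) ∈ ⋃ n, K n := by
      rw [← hKg]; exact rfl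
    obtain ⟨n, hn⟩ := Set.mem_iUnion.1 hx
    exact ⟨n, ⟨(x, f x), hn, rfl⟩⟩
  refine ⟨⋃ n, interior (A n), isOpen_iUnion fun n => isOpen_interior,
    dense_iUnion_interior_of_closed hAc hcover, ?_⟩
  intro x hx
  obtain ⟨n, hxn⟩ := Set.mem_iUnion.1 hx
  rw [ContinuousAt, tendsto_nhds]
  intro V hV hfxV
  have hC : IsCompact (K n ∩ (Prod.snd ⁻¹' Vᶜ)) :=
    (hKc n).inter_right (hV.isClosed_compl.preimage continuous_snd)
  have hP : IsClosed (Prod.fst '' (K n ∩ Prod.snd ⁻¹' Vᶜ)) :=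
    (hC.image continuous_fst).isClosed
  have hxP : x ∉ Prod.fst '' (K n ∩ Prod.snd ⁻¹' Vᶜ) := by
    rintro ⟨⟨a, b⟩, ⟨hK, hb⟩, rfl⟩
    exact hb (by have := hgraph n _ hK; simp only at this; rw [this]; exact hfxV)
  have hW : interior (A n) ∩ (Prod.fst '' (K n ∩ Prod.snd ⁻¹' Vᶜ))ᶜ ∈ nhds x :=
    Filter.inter_mem (isOpen_interior.mem_nhds hxn) (hP.isOpen_compl.mem_nhds hxP)
  filter_upwards [hW] with y hy
  obtain ⟨hy1, hy2⟩ := hy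
  obtain ⟨p, hp, hpy⟩ := (interior_subset hy1 : y ∈ A n)
  have hpf : p.2 = f p.1 := hgraph n p hp
  by_contra hfy
  exact hy2 ⟨p, ⟨hp, by rw [Set.mem_preimage, hpf, hpy]; exact hfy⟩, hpy⟩
end

section
/- Let p : ℝ → ℝ be a function with closed graph, and suppose p is continuous on the open interval (a, b) with b ∈ ℝ. Then exactly one of the following holds: lim_{x→b⁻} p(x) = p(b), lim_{x→b⁻} p(x) = +∞, or lim_{x→b⁻} p(x) = -∞. -/
open Filter Topology Set

/-!
By the closed graph, the only finite cluster value of `p` at `b⁻` is `p b`. For a level `c ≠ p b`,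
the intermediate value theorem forbids `p` from being frequently below and frequently above `c`
(it would then take the value `c` arbitrarily close to `b`), so `p` eventually stays on one side of
`c`. If `p` tends neither to `+∞` nor to `-∞`, it is frequently below some `M` and above some `m`,
and a compactness argument on `[c, M]` resp. `[m, c]` shows that the side it stays on is the one
containing `p b`. The three limits exclude each other because their target filters are disjoint.
-/

theorem apply_mem_of_frequently_apply_mem {X Y : Type*} [TopologicalSpace X] [TopologicalSpace Y]
    {f : X → Y} (hf : IsClosed {q : X × Y | q.2 = f q.1}) {l : Filter X} {x : X} (hl : l ≤ 𝓝 x)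
    {K : Set Y} (hK : IsCompact K) (h : ∃ᶠ z in l, f z ∈ K) : f x ∈ K := by
  obtain ⟨y, hyK, hy⟩ := hK.exists_mapClusterPt_of_frequently h
  have hxy : MapClusterPt (x, y) l fun z ↦ (z, f z) := by
    rw [mapClusterPt_iff_frequently]
    intro s hs
    obtain ⟨u, hu, v, hv, huv⟩ := mem_nhds_prod_iff.1 hs
    exact ((mapClusterPt_iff_frequently.1 hy v hv).and_eventually (hl hu)).mono
      fun z hz ↦ huv ⟨hz.2, hz.1⟩
  have hgraph : (x, y) ∈ {q : X × Y | q.2 = f q.1} :=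
    hf.closure_subset (hxy.mem_closure_of_mem _ (mem_map.2 (univ_mem' fun _ ↦ rfl)))
  rwa [← hgraph]

theorem ContinuousOn.frequently_eq_nhdsLT {α δ : Type*} [ConditionallyCompleteLinearOrder α]
    [TopologicalSpace α] [OrderTopology α] [DenselyOrdered α] [LinearOrder δ]
    [TopologicalSpace δ] [OrderClosedTopology δ] {g : α → δ} {a b : α} (hab : a < b)
    (hg : ContinuousOn g (Ioo a b)) {c : δ} (hlt : ∃ᶠ x in 𝓝[<] b, g x < c)
    (hgt : ∃ᶠ x in 𝓝[<] b, c < g x) : ∃ᶠ x in 𝓝[<] b, g x = c := by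
  intro hne
  obtain ⟨a', ha'b, hsub⟩ := (mem_nhdsLT_iff_exists_Ioo_subset' hab).1
    (inter_mem (Ioo_mem_nhdsLT hab) hne)
  obtain ⟨x₁, hx₁, hx₁I⟩ := (hlt.and_eventually (Ioo_mem_nhdsLT ha'b)).exists
  obtain ⟨x₂, hx₂, hx₂I⟩ := (hgt.and_eventually (Ioo_mem_nhdsLT ha'b)).exists
  have himage : IsPreconnected (g '' Ioo a' b) :=
    isPreconnected_Ioo.image g (hg.mono fun x hx ↦ (hsub hx).1)
  obtain ⟨x, hx, hgx⟩ := himage.Icc_subset (mem_image_of_mem g hx₁I) (mem_image_of_mem g hx₂I)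
    ⟨hx₁.le, hx₂.le⟩
  exact (hsub hx).2 hgx

section LeftLimit

variable {α δ : Type*} [ConditionallyCompleteLinearOrder α] [TopologicalSpace α] [OrderTopology α]
  [DenselyOrdered α] [ConditionallyCompleteLinearOrder δ] [TopologicalSpace δ] [OrderTopology δ]
  {p : α → δ} {a b : α}

theorem eventually_lt_or_eventually_gt_nhdsLT (hgraph : IsClosed {q : α × δ | q.2 = p q.1})
    (hab : a < b) (hcont : ContinuousOn p (Ioo a b)) {c : δ} (hc : c ≠ p b) :
    (∀ᶠ x in 𝓝[<] b, p x < c) ∨ ∀ᶠ x in 𝓝[<] b, c < p x := by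
  have hne : ∀ᶠ x in 𝓝[<] b, p x ≠ c := not_frequently.1 fun h ↦
    hc (apply_mem_of_frequently_apply_mem hgraph nhdsWithin_le_nhds isCompact_singleton h).symm
  refine (not_and_or.1 fun h ↦ hcont.frequently_eq_nhdsLT hab h.1 h.2 hne).symm.imp ?_ ?_
  · exact fun h ↦ ((not_frequently.1 h).and hne).mono fun x hx ↦
      lt_of_le_of_ne (not_lt.1 hx.1) hx.2
  · exact fun h ↦ ((not_frequently.1 h).and hne).mono fun x hx ↦
      lt_of_le_of_ne (not_lt.1 hx.1) hx.2.symm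

theorem tendsto_nhds_of_not_tendsto_atTop_of_not_tendsto_atBot
    (hgraph : IsClosed {q : α × δ | q.2 = p q.1}) (hab : a < b) (hcont : ContinuousOn p (Ioo a b))
    (hT : ¬Tendsto p (𝓝[<] b) atTop) (hB : ¬Tendsto p (𝓝[<] b) atBot) :
    Tendsto p (𝓝[<] b) (𝓝 (p b)) := by
  simp only [tendsto_atTop, tendsto_atBot, not_forall, not_eventually, not_le] at hT hB
  obtain ⟨M, hM⟩ := hT
  obtain ⟨m, hm⟩ := hB
  have hcluster {K : Set δ} (hK : IsCompact K) (h : ∃ᶠ x in 𝓝[<] b, p x ∈ K) : p b ∈ K :=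
    apply_mem_of_frequently_apply_mem hgraph nhdsWithin_le_nhds hK h
  have hside {c : δ} (hc : c ≠ p b) := eventually_lt_or_eventually_gt_nhdsLT hgraph hab hcont hc
  refine tendsto_order.2 ⟨fun c hc ↦ (hside hc.ne).resolve_left fun hlt ↦ ?_,
    fun c hc ↦ (hside hc.ne').resolve_right fun hgt ↦ ?_⟩
  · have hfreq : ∃ᶠ x in 𝓝[<] b, p x ∈ Icc m c :=
      (hm.and_eventually hlt).mono fun x hx ↦ ⟨hx.1.le, hx.2.le⟩
    exact hc.not_ge (hcluster isCompact_Icc hfreq).2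
  · have hfreq : ∃ᶠ x in 𝓝[<] b, p x ∈ Icc c M :=
      (hM.and_eventually hgt).mono fun x hx ↦ ⟨hx.2.le, hx.1.le⟩
    exact hc.not_ge (hcluster isCompact_Icc hfreq).1

end LeftLimit

theorem stmt_4 (p : ℝ → ℝ) (hgraph : IsClosed {q : ℝ × ℝ | q.2 = p q.1})
    (a b : ℝ) (hab : a < b) (hcont : ContinuousOn p (Set.Ioo a b)) :
    (Tendsto p (nhdsWithin b (Set.Iio b)) (nhds (p b)) ∧
      ¬ Tendsto p (nhdsWithin b (Set.Iio b)) atTop ∧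
      ¬ Tendsto p (nhdsWithin b (Set.Iio b)) atBot) ∨
    (¬ Tendsto p (nhdsWithin b (Set.Iio b)) (nhds (p b)) ∧
      Tendsto p (nhdsWithin b (Set.Iio b)) atTop ∧
      ¬ Tendsto p (nhdsWithin b (Set.Iio b)) atBot) ∨
    (¬ Tendsto p (nhdsWithin b (Set.Iio b)) (nhds (p b)) ∧
      ¬ Tendsto p (nhdsWithin b (Set.Iio b)) atTop ∧
      Tendsto p (nhdsWithin b (Set.Iio b)) atBot) := by
  by_cases hT : Tendsto p (𝓝[<] b) atTop
  · exact Or.inr <| Or.inl ⟨fun h ↦ h.not_tendsto (disjoint_nhds_atTop _) hT, hT,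
      fun h ↦ h.not_tendsto disjoint_atBot_atTop hT⟩
  by_cases hB : Tendsto p (𝓝[<] b) atBot
  · exact Or.inr <| Or.inr ⟨fun h ↦ h.not_tendsto (disjoint_nhds_atBot _) hB, hT, hB⟩
  exact Or.inl ⟨tendsto_nhds_of_not_tendsto_atTop_of_not_tendsto_atBot hgraph hab hcont hT hB,
    hT, hB⟩
end

section
/- Let p : ℝ → ℝ be a function with closed graph, let F = ℝ \ G where G is the (open) set of continuity points of p. Suppose F has no isolated points, G is dense, and p extends continuously to the closure of each connected component of G. Then every point x₀ ∈ F at which the restriction p|_F : F → ℝ is continuous is in fact a continuity point of p on ℝ. -/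
/-!
If `p` were discontinuous at `x₀ ∈ F`, there would be points `x` arbitrarily close to `x₀` with
`|p x - p x₀| ≥ ε`, while `|p - p x₀| < ε / 2` on `F` near `x₀`. Let `a` be the last point of
`closure F` between `x₀` and `x`: then `p` is continuous on `[a, x]` and `|p a - p x₀| ≤ ε / 2`,
so the intermediate value theorem gives `y` between `x₀` and `x` with `|p y - p x₀| = ε / 2`.
Since the graph of `p` is closed, so is this level set, which therefore contains `x₀`: absurd.
-/

open Set Metric OrderDual

theorem isClosed_preimage_of_isClosed_graph {X Y : Type*} [TopologicalSpace X]
    [TopologicalSpace Y] {p : X → Y} (hp : IsClosed {q : X × Y | q.2 = p q.1}) {s : Set Y}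
    (hs : s.Finite) : IsClosed (p ⁻¹' s) := by
  rw [← biUnion_preimage_singleton]
  refine hs.isClosed_biUnion fun y _ => ?_
  have hfiber : p ⁻¹' {y} = (fun x => (x, y)) ⁻¹' {q : X × Y | q.2 = p q.1} := by
    ext; simp [eq_comm]
  exact hfiber ▸ hp.preimage (continuous_id.prodMk continuous_const)

section IntermediateValue

variable {α δ : Type*} [ConditionallyCompleteLinearOrder α] [TopologicalSpace α] [OrderTopology α]
  [DenselyOrdered α] [LinearOrder δ] [TopologicalSpace δ] [OrderClosedTopology δ]

theorem exists_mem_Icc_eq_of_le_on_compl {g : α → δ} {G : Set α}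
    (hG : ∀ t ∈ G, ContinuousAt g t)
    (hext : ∀ a b, Ioo a b ⊆ G → ContinuousOn g (Icc a b))
    {x₀ x : α} {r : δ} (hx₀ : x₀ ∉ G) (hx : x₀ ≤ x)
    (hle : ∀ y ∈ Icc x₀ x, y ∉ G → g y ≤ r) (hr : r ≤ g x) :
    ∃ y ∈ Icc x₀ x, g y = r := by
  set S := Gᶜ ∩ Icc x₀ x
  have hS : IsCompact (closure S) := isCompact_Icc.closure_of_subset inter_subset_right
  set a := sSup (closure S)
  have ha : a ∈ closure S := hS.sSup_mem (closure_nonempty_iff.2 ⟨x₀, hx₀, left_mem_Icc.2 hx⟩)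
  have haIcc : a ∈ Icc x₀ x := closure_minimal inter_subset_right isClosed_Icc ha
  have hgap : Ioo a x ⊆ G := fun t ht => by_contra fun htG =>
    ht.1.not_ge <| le_csSup hS.bddAbove <| subset_closure ⟨htG, haIcc.1.trans ht.1.le, ht.2.le⟩
  have hga : g a ≤ r := by
    by_cases haG : a ∈ G
    · exact (hG a haG).continuousWithinAt.closure_le ha continuousWithinAt_const
        fun y hy => hle y hy.2 hy.1
    · exact hle a haIcc haG
  obtain ⟨y, hy, hgy⟩ := intermediate_value_Icc haIcc.2 (hext a x hgap) ⟨hga, hr⟩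
  exact ⟨y, ⟨haIcc.1.trans hy.1, hy.2⟩, hgy⟩

theorem exists_mem_uIcc_eq_of_le_on_compl {g : α → δ} {G : Set α}
    (hG : ∀ t ∈ G, ContinuousAt g t)
    (hext : ∀ a b, Ioo a b ⊆ G → ContinuousOn g (Icc a b))
    {x₀ x : α} {r : δ} (hx₀ : x₀ ∉ G)
    (hle : ∀ y ∈ uIcc x₀ x, y ∉ G → g y ≤ r) (hr : r ≤ g x) :
    ∃ y ∈ uIcc x₀ x, g y = r := by
  rcases le_total x₀ x with hx | hx
  · rw [uIcc_of_le hx] at hle ⊢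
    exact exists_mem_Icc_eq_of_le_on_compl hG hext hx₀ hx hle hr
  · rw [uIcc_of_ge hx] at hle ⊢
    have hG' : ∀ t ∈ ofDual ⁻¹' G, ContinuousAt (g ∘ ofDual) t :=
      fun t ht => (hG _ ht).comp continuous_ofDual.continuousAt
    have hext' : ∀ a b : αᵒᵈ, Ioo a b ⊆ ofDual ⁻¹' G → ContinuousOn (g ∘ ofDual) (Icc a b) :=
      fun a b hab => (hext (ofDual b) (ofDual a) fun t ht => hab ⟨ht.2, ht.1⟩).comp
        continuous_ofDual.continuousOn fun t ht => ⟨ht.2, ht.1⟩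
    obtain ⟨y, hy, hgy⟩ := exists_mem_Icc_eq_of_le_on_compl hG' hext' (x₀ := toDual x₀)
      (x := toDual x) hx₀ hx (fun y hy => hle y ⟨hy.2, hy.1⟩) hr
    exact ⟨ofDual y, ⟨hy.2, hy.1⟩, hgy⟩

end IntermediateValue

theorem stmt_6_general (p : ℝ → ℝ) (hgraph : IsClosed {q : ℝ × ℝ | q.2 = p q.1})
    (G : Set ℝ) (hG : G = {x | ContinuousAt p x}) (F : Set ℝ) (hF : F = Gᶜ)
    (hext : ∀ a b : ℝ, Set.Ioo a b ⊆ G → ContinuousOn p (Set.Icc a b)) :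
    ∀ x₀ ∈ F, ContinuousWithinAt p F x₀ → ContinuousAt p x₀ := by
  subst hF hG
  intro x₀ hx₀ hcw
  have hgG : ∀ t ∈ {x | ContinuousAt p x}, ContinuousAt (fun t => dist (p t) (p x₀)) t :=
    fun t (ht : ContinuousAt p t) => by fun_prop
  have hgext : ∀ a b, Ioo a b ⊆ {x | ContinuousAt p x} →
      ContinuousOn (fun t => dist (p t) (p x₀)) (Icc a b) := fun a b hab => by
    have := hext a b hab
    fun_prop
  by_contra hdisc
  obtain ⟨ε, hε, hfar⟩ : ∃ ε > 0, ∀ δ > 0, ∃ x, dist x x₀ < δ ∧ ε ≤ dist (p x) (p x₀) := by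
    simpa [Metric.continuousAt_iff] using hdisc
  obtain ⟨δ, hδ, hnear⟩ := Metric.continuousWithinAt_iff.1 hcw (ε / 2) (half_pos hε)
  have hsphere : IsClosed (p ⁻¹' sphere (p x₀) (ε / 2)) :=
    isClosed_preimage_of_isClosed_graph hgraph <| by
      rw [Real.sphere_eq_pair _ (half_pos hε).le]; exact toFinite _
  have hx₀_mem : x₀ ∈ closure (p ⁻¹' sphere (p x₀) (ε / 2)) := by
    refine Metric.mem_closure_iff.2 fun r hr => ?_
    obtain ⟨x, hxx₀, hpx⟩ := hfar (min r δ) (lt_min hr hδ)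
    have hclose : ∀ y ∈ uIcc x₀ x, dist x₀ y < min r δ := fun y hy =>
      (Real.dist_left_le_of_mem_uIcc hy).trans_lt (dist_comm x x₀ ▸ hxx₀)
    obtain ⟨y, hy, hpy⟩ := exists_mem_uIcc_eq_of_le_on_compl hgG hgext hx₀
      (fun y hy hyG => (hnear hyG <| dist_comm x₀ y ▸ (hclose y hy).trans_le (min_le_right _ _)).le)
      (by linarith)
    exact ⟨y, hpy, (hclose y hy).trans_le (min_le_left _ _)⟩
  have hself : dist (p x₀) (p x₀) = ε / 2 := hsphere.closure_subset hx₀_mem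
  rw [dist_self] at hself
  linarith

theorem stmt_6 (p : ℝ → ℝ) (hgraph : IsClosed {q : ℝ × ℝ | q.2 = p q.1})
    (G : Set ℝ) (hG : G = {x | ContinuousAt p x}) (F : Set ℝ) (hF : F = Gᶜ)
    (hnoiso : ∀ x ∈ F, x ∈ closure (F \ {x}))
    (hdense : Dense G)
    (hext : ∀ a b : ℝ, Set.Ioo a b ⊆ G → ContinuousOn p (Set.Icc a b)) :
    ∀ x₀ ∈ F, ContinuousWithinAt p F x₀ → ContinuousAt p x₀ :=
  stmt_6_general p hgraph G hG F hF hext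
end

section
/- Let p : ℝ → ℝ be a function with closed graph. Suppose that 𝒜_p := {f ∈ C⁰(ℝ,ℝ) : f(p(·)+c) ∈ C⁰(ℝ,ℝ) for all c ∈ ℝ} contains a nonconstant function. Then p is continuous on all of ℝ. -/
open Filter Set

/-- Closed graph: limits along sequences are determined. -/
private lemma graphLim {q : ℝ → ℝ} (hg : IsClosed {pt : ℝ × ℝ | pt.2 = q pt.1})
    {u : ℕ → ℝ} {x L : ℝ} (hu : Tendsto u atTop (nhds x))
    (hq : Tendsto (fun n => q (u n)) atTop (nhds L)) : L = q x :=
  hg.mem_of_tendsto (hu.prodMk_nhds hq) (Eventually.of_forall fun _ => rfl)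

/-- Closed graph + local boundedness implies continuity at a point. -/
private lemma contAt_of_locBdd {q : ℝ → ℝ} (hg : IsClosed {pt : ℝ × ℝ | pt.2 = q pt.1})
    {x δ n : ℝ} (hδ : 0 < δ) (hb : ∀ y, |y - x| < δ → |q y| ≤ n) :
    ContinuousAt q x := by
  by_contra hc
  rw [Metric.continuousAt_iff] at hc
  push_neg at hc
  obtain ⟨ε, hε, hbad⟩ := hc
  choose u hu1 hu2 using fun m : ℕ => hbad (min δ (1 / (m + 1))) (by positivity)
  have hut : Tendsto u atTop (nhds x) := by
    rw [tendsto_iff_dist_tendsto_zero]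
    refine squeeze_zero (fun m => dist_nonneg) (fun m => ?_) tendsto_one_div_add_atTop_nhds_zero_nat
    exact le_of_lt (lt_of_lt_of_le (hu1 m) (min_le_right _ _))
  have hmem : ∀ m, q (u m) ∈ Icc (-n) n := by
    intro m
    have : |u m - x| < δ := by
      rw [← Real.dist_eq]; exact lt_of_lt_of_le (hu1 m) (min_le_left _ _)
    exact mem_Icc.mpr (abs_le.mp (hb (u m) this))
  obtain ⟨L, _, φ, hφ, hqφ⟩ := tendsto_subseq_of_bounded (Metric.isBounded_Icc (-n) n) hmem
  have hLq : L = q x := graphLim hg (hut.comp hφ.tendsto_atTop) hqφ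
  have hdt : Tendsto (fun m => dist (q (u (φ m))) (q x)) atTop (nhds (dist L (q x))) :=
    hqφ.dist tendsto_const_nhds
  have hεle : ε ≤ dist L (q x) :=
    ge_of_tendsto hdt (Eventually.of_forall fun m => hu2 (φ m))
  rw [hLq, dist_self] at hεle
  linarith

/-- The continuity set is open (given closed graph). -/
private lemma open_contSet (q : ℝ → ℝ) (hg : IsClosed {pt : ℝ × ℝ | pt.2 = q pt.1}) :
    IsOpen {x | ContinuousAt q x} := by
  rw [Metric.isOpen_iff]
  intro x hx
  obtain ⟨δ, hδ, hb⟩ := Metric.continuousAt_iff.mp hx 1 one_pos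
  refine ⟨δ / 2, by linarith, fun y hy => ?_⟩
  rw [Metric.mem_ball, Real.dist_eq] at hy
  refine contAt_of_locBdd hg (show (0:ℝ) < δ/2 by linarith) (n := |q x| + 1) ?_
  intro z hz
  have hzx : dist z x < δ := by
    rw [Real.dist_eq]
    calc |z - x| = |(z - y) + (y - x)| := by ring_nf
    _ ≤ |z - y| + |y - x| := abs_add_le _ _
    _ < δ / 2 + δ / 2 := by gcongr
    _ = δ := by ring
  have := hb hzx
  rw [Real.dist_eq] at this
  calc |q z| = |q x + (q z - q x)| := by ring_nf
  _ ≤ |q x| + |q z - q x| := abs_add_le _ _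
  _ ≤ |q x| + 1 := by linarith

/-- Sublevel sets of |q| are closed (given closed graph). -/
private lemma closed_absLe (q : ℝ → ℝ) (hg : IsClosed {pt : ℝ × ℝ | pt.2 = q pt.1})
    (n : ℝ) : IsClosed {x | |q x| ≤ n} := by
  apply IsSeqClosed.isClosed
  intro u x hu hux
  have hmem : ∀ m, q (u m) ∈ Icc (-n) n := fun m => mem_Icc.mpr (abs_le.mp (hu m))
  obtain ⟨L, hL, φ, hφ, hqφ⟩ := tendsto_subseq_of_bounded (Metric.isBounded_Icc (-n) n) hmem
  have hLq : L = q x := graphLim hg (hux.comp hφ.tendsto_atTop) hqφ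
  rw [isClosed_Icc.closure_eq] at hL
  have habs : |L| ≤ n := abs_le.mpr ⟨hL.1, hL.2⟩
  rw [hLq] at habs
  exact habs

/-- Core blow-up lemma: p attains all large values near some point z. -/
private lemma coreBlowup {q : ℝ → ℝ} (hg : IsClosed {pt : ℝ × ℝ | pt.2 = q pt.1})
    {x₀ n₀ ρ : ℝ} (hρ : 0 < ρ)
    (H3 : ∀ x, x₀ ≤ x → x < x₀ + ρ → ¬ ContinuousAt q x → |q x| ≤ n₀)
    (H2 : ∀ δ > (0:ℝ), ∀ M : ℝ, ∃ y, x₀ < y ∧ y < x₀ + δ ∧ M < q y) :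
    ∃ z, ∀ ε > (0:ℝ), ∃ A, ∀ s, A ≤ s → ∃ y, |y - z| < ε ∧ q y = s := by
  by_cases hQ : ∀ ε > (0:ℝ), ∀ s, n₀ + 2 ≤ s → ∃ y, x₀ < y ∧ y < x₀ + ε ∧ q y = s
  · refine ⟨x₀, fun ε hε => ⟨n₀ + 2, fun s hs => ?_⟩⟩
    obtain ⟨y, h1, h2, h3⟩ := hQ ε hε s hs
    exact ⟨y, abs_lt.mpr ⟨by linarith, by linarith⟩, h3⟩
  · push_neg at hQ
    obtain ⟨ε₀, hε₀, s₀, hs₀, hnot⟩ := hQ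
    set ε₁ := min ε₀ ρ with hε₁def
    have hε₁ : 0 < ε₁ := lt_min hε₀ hρ
    obtain ⟨y₀, hy₀l, hy₀r, hy₀v⟩ := H2 ε₁ hε₁ s₀
    have hy₀ε₀ : y₀ < x₀ + ε₀ := lt_of_lt_of_le hy₀r (by simp [hε₁def, min_le_left])
    have hy₀ρ : y₀ < x₀ + ρ := lt_of_lt_of_le hy₀r (by simp [hε₁def, min_le_right])
    -- x₀ is a discontinuity point
    have hdx₀ : ¬ ContinuousAt q x₀ := by
      intro hc
      obtain ⟨δ, hδ, hb⟩ := Metric.continuousAt_iff.mp hc 1 one_pos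
      obtain ⟨y, h1, h2, h3⟩ := H2 δ hδ (q x₀ + 1)
      have : dist y x₀ < δ := by rw [Real.dist_eq]; exact abs_lt.mpr ⟨by linarith, by linarith⟩
      have := hb this
      rw [Real.dist_eq] at this
      have := abs_lt.mp this
      linarith [this.2]
    set S := Icc x₀ y₀ ∩ {x | ¬ ContinuousAt q x} with hSdef
    have hSclosed : IsClosed S := by
      apply isClosed_Icc.inter
      exact (open_contSet q hg).isClosed_compl
    have hSne : S.Nonempty := ⟨x₀, ⟨le_refl _, le_of_lt hy₀l⟩, hdx₀⟩
    have hSbdd : BddAbove S := ⟨y₀, fun x hx => hx.1.2⟩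
    set w := sSup S with hwdef
    have hwS : w ∈ S := hSclosed.csSup_mem hSne hSbdd
    have hw1 : x₀ ≤ w := hwS.1.1
    have hw2 : w ≤ y₀ := hwS.1.2
    have hwd : ¬ ContinuousAt q w := hwS.2
    have hwb : |q w| ≤ n₀ := H3 w hw1 (by linarith) hwd
    have hwy₀ : w < y₀ := by
      rcases lt_or_eq_of_le hw2 with h | h
      · exact h
      · exfalso
        rw [h] at hwb
        have := le_abs_self (q y₀)
        linarith
    have hcont : ∀ x, w < x → x ≤ y₀ → ContinuousAt q x := by
      intro x h1 h2
      by_contra hd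
      have : x ∈ S := ⟨⟨le_trans hw1 (le_of_lt h1), h2⟩, hd⟩
      have := le_csSup hSbdd this
      linarith
    have hgt : ∀ x, w < x → x ≤ y₀ → s₀ < q x := by
      intro x h1 h2
      by_contra hle
      push_neg at hle
      have hx₀x : x₀ < x := lt_of_le_of_lt hw1 h1
      have hxε₀ : x < x₀ + ε₀ := by linarith
      have hne : q x ≠ s₀ := hnot x hx₀x hxε₀
      have hlt : q x < s₀ := lt_of_le_of_ne hle hne
      have hco : ContinuousOn q (Icc x y₀) := fun u hu =>
        (hcont u (lt_of_lt_of_le h1 hu.1) hu.2).continuousWithinAt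
      have hmem : s₀ ∈ Icc (q x) (q y₀) := ⟨le_of_lt hlt, le_of_lt hy₀v⟩
      obtain ⟨u, hu, huv⟩ := intermediate_value_Icc h2 hco hmem
      exact hnot u (lt_of_lt_of_le hx₀x hu.1) (by linarith [hu.2]) huv
    have hlim : ∀ M : ℝ, ∃ δ > (0:ℝ), ∀ y, w < y → y < w + δ → y ≤ y₀ → M < q y := by
      intro M
      by_contra hM
      push_neg at hM
      choose u hu1 hu2 hu3 hu4 using fun m : ℕ => hM (1 / (m + 1)) (by positivity)
      have hut : Tendsto u atTop (nhds w) := by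
        rw [tendsto_iff_dist_tendsto_zero]
        refine squeeze_zero (fun m => dist_nonneg) (fun m => ?_)
          tendsto_one_div_add_atTop_nhds_zero_nat
        rw [Real.dist_eq]
        rw [abs_of_pos (by linarith [hu1 m])]
        linarith [hu2 m]
      have hmem : ∀ m, q (u m) ∈ Icc s₀ (max M s₀) := by
        intro m
        refine mem_Icc.mpr ⟨le_of_lt (hgt (u m) (hu1 m) (hu3 m)), ?_⟩
        exact le_trans (hu4 m) (le_max_left _ _)
      obtain ⟨L, hL, φ, hφ, hqφ⟩ := tendsto_subseq_of_bounded
        (Metric.isBounded_Icc s₀ (max M s₀)) hmem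
      have hLq : L = q w := graphLim hg (hut.comp hφ.tendsto_atTop) hqφ
      rw [isClosed_Icc.closure_eq] at hL
      have hLs₀ : s₀ ≤ L := hL.1
      have : q w ≤ n₀ := le_trans (le_abs_self _) hwb
      linarith [hLq ▸ hLs₀]
    refine ⟨w, fun ε hε => ?_⟩
    obtain ⟨ζ, hζdef⟩ : ∃ t : ℝ, t = w + min ε (y₀ - w) / 2 := ⟨_, rfl⟩
    have hζ1 : w < ζ := by
      have : 0 < min ε (y₀ - w) := lt_min hε (by linarith)
      rw [hζdef]; linarith
    have hζ2 : ζ < w + ε := by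
      have : min ε (y₀ - w) ≤ ε := min_le_left _ _
      rw [hζdef]; linarith
    have hζ3 : ζ ≤ y₀ := by
      have : min ε (y₀ - w) ≤ y₀ - w := min_le_right _ _
      rw [hζdef]; linarith
    refine ⟨q ζ, fun s hs => ?_⟩
    obtain ⟨δ, hδ, hδp⟩ := hlim s
    obtain ⟨y₁, hy₁def⟩ : ∃ t : ℝ, t = w + min δ (ζ - w) / 2 := ⟨_, rfl⟩
    have hy₁1 : w < y₁ := by
      have : 0 < min δ (ζ - w) := lt_min hδ (by linarith)
      rw [hy₁def]; linarith
    have hy₁2 : y₁ < w + δ := by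
      have h1 : min δ (ζ - w) ≤ δ := min_le_left _ _
      rw [hy₁def]; linarith
    have hy₁3 : y₁ < ζ := by
      have : min δ (ζ - w) ≤ ζ - w := min_le_right _ _
      have h0 : 0 < min δ (ζ - w) := lt_min hδ (by linarith)
      rw [hy₁def]; linarith
    have hsy₁ : s < q y₁ := hδp y₁ hy₁1 hy₁2 (by linarith)
    have hco : ContinuousOn q (Icc y₁ ζ) := fun u hu =>
      (hcont u (lt_of_lt_of_le hy₁1 hu.1) (le_trans hu.2 hζ3)).continuousWithinAt
    have hmem : s ∈ Icc (q ζ) (q y₁) := ⟨hs, le_of_lt hsy₁⟩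
    obtain ⟨y, hy, hyv⟩ := intermediate_value_Icc' (le_of_lt hy₁3) hco hmem
    exact ⟨y, abs_lt.mpr ⟨by linarith [hy.1], by linarith [hy.2]⟩, hyv⟩

/-- If q attains all large values near z, then f must be constant. -/
private lemma constOfBlowup {q f : ℝ → ℝ} (hcomp : ∀ c : ℝ, Continuous fun x => f (q x + c))
    {z : ℝ} (hb : ∀ ε > (0:ℝ), ∃ A, ∀ s, A ≤ s → ∃ y, |y - z| < ε ∧ q y = s) :
    ∃ k, f = fun _ => k := by
  have key : ∀ c, Tendsto (fun s => f (s + c)) atTop (nhds (f (q z + c))) := by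
    intro c
    rw [Metric.tendsto_nhds]
    intro η hη
    rw [eventually_atTop]
    have hgc : ContinuousAt (fun x => f (q x + c)) z := (hcomp c).continuousAt
    obtain ⟨ε, hε, hball⟩ := Metric.continuousAt_iff.mp hgc η hη
    obtain ⟨A, hA⟩ := hb ε hε
    refine ⟨A, fun s hs => ?_⟩
    obtain ⟨y, hy, hyv⟩ := hA s hs
    have := hball (show dist y z < ε by rwa [Real.dist_eq])
    rwa [hyv] at this
  have T0 : Tendsto f atTop (nhds (f (q z))) := by simpa using key 0
  have keyc : ∀ c, f (q z + c) = f (q z) := by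
    intro c
    have T1 : Tendsto (fun s => f (s + c)) atTop (nhds (f (q z))) :=
      T0.comp (tendsto_atTop_add_const_right atTop c tendsto_id)
    exact tendsto_nhds_unique (key c) T1
  exact ⟨f (q z), funext fun u => by simpa using keyc (u - q z)⟩

/-- Combined piece: blow-up hypotheses force f constant. -/
private lemma finalPiece {q f : ℝ → ℝ} (hg : IsClosed {pt : ℝ × ℝ | pt.2 = q pt.1})
    (hcomp : ∀ c : ℝ, Continuous fun x => f (q x + c))
    {x₀ n₀ ρ : ℝ} (hρ : 0 < ρ)
    (H3 : ∀ x, x₀ ≤ x → x < x₀ + ρ → ¬ ContinuousAt q x → |q x| ≤ n₀)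
    (H2 : ∀ δ > (0:ℝ), ∀ M : ℝ, ∃ y, x₀ < y ∧ y < x₀ + δ ∧ M < q y) :
    ∃ k, f = fun _ => k := by
  obtain ⟨z, hz⟩ := coreBlowup hg hρ H3 H2
  exact constOfBlowup hcomp hz

theorem stmt_7 (p : ℝ → ℝ) (hgraph : IsClosed {q : ℝ × ℝ | q.2 = p q.1})
    (h : ∃ f : ℝ → ℝ, (Continuous f ∧ ∀ c : ℝ, Continuous fun x => f (p x + c)) ∧
      ¬ ∃ k : ℝ, f = fun _ => k) :
    Continuous p := by
  obtain ⟨f, ⟨hf, hcomp⟩, hnc⟩ := h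
  by_contra hp
  rw [continuous_iff_continuousAt] at hp
  push_neg at hp
  obtain ⟨x₁, hx₁⟩ := hp
  -- auxiliary graphs
  have hg2 : IsClosed {pt : ℝ × ℝ | pt.2 = -p pt.1} := by
    have : {pt : ℝ × ℝ | pt.2 = -p pt.1}
        = (fun pt : ℝ × ℝ => (pt.1, -pt.2)) ⁻¹' {pt : ℝ × ℝ | pt.2 = p pt.1} := by
      ext pt; simp only [mem_setOf_eq, mem_preimage]
      constructor <;> intro h <;> linarith
    rw [this]
    exact hgraph.preimage (by fun_prop)
  have hg3 : IsClosed {pt : ℝ × ℝ | pt.2 = p (-pt.1)} := by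
    have : {pt : ℝ × ℝ | pt.2 = p (-pt.1)}
        = (fun pt : ℝ × ℝ => (-pt.1, pt.2)) ⁻¹' {pt : ℝ × ℝ | pt.2 = p pt.1} := rfl
    rw [this]
    exact hgraph.preimage (by fun_prop)
  have hg4 : IsClosed {pt : ℝ × ℝ | pt.2 = -p (-pt.1)} := by
    have : {pt : ℝ × ℝ | pt.2 = -p (-pt.1)}
        = (fun pt : ℝ × ℝ => (-pt.1, -pt.2)) ⁻¹' {pt : ℝ × ℝ | pt.2 = p pt.1} := by
      ext pt; simp only [mem_setOf_eq, mem_preimage]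
      constructor <;> intro h <;> linarith
    rw [this]
    exact hgraph.preimage (by fun_prop)
  -- auxiliary functions
  set f2 : ℝ → ℝ := fun u => f (-u) with hf2def
  have hcomp2 : ∀ c : ℝ, Continuous fun x => f2 (-p x + c) := by
    intro c
    have : (fun x => f2 (-p x + c)) = fun x => f (p x + (-c)) := by
      funext x; simp only [hf2def]; congr 1; ring
    rw [this]; exact hcomp (-c)
  have hcomp3 : ∀ c : ℝ, Continuous fun x => f (p (-x) + c) := fun c =>
    (hcomp c).comp continuous_neg
  have hcomp4 : ∀ c : ℝ, Continuous fun x => f2 (-p (-x) + c) := by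
    intro c
    have : (fun x => f2 (-p (-x) + c)) = fun x => f (p (-x) + (-c)) := by
      funext x; simp only [hf2def]; congr 1; ring
    rw [this]; exact hcomp3 (-c)
  have hf2const : (∃ k, f2 = fun _ => k) → (∃ k, f = fun _ => k) := by
    rintro ⟨k, hk⟩
    refine ⟨k, funext fun u => ?_⟩
    have := congrFun hk (-u)
    simpa [hf2def] using this
  -- Baire category setup
  set D := {x : ℝ | ¬ ContinuousAt p x} with hDdef
  have hDclosed : IsClosed D := (open_contSet p hgraph).isClosed_compl
  haveI : Nonempty D := ⟨⟨x₁, hx₁⟩⟩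
  haveI : CompleteSpace D := hDclosed.completeSpace_coe
  have hUnion : (⋃ n : ℕ, {x : D | |p x.val| ≤ (n:ℝ)}) = Set.univ := by
    ext x
    simp only [mem_iUnion, mem_setOf_eq, mem_univ, iff_true]
    exact ⟨⌈|p x.val|⌉₊, Nat.le_ceil _⟩
  have hclosed_n : ∀ n : ℕ, IsClosed {x : D | |p x.val| ≤ (n:ℝ)} := fun n =>
    (closed_absLe p hgraph n).preimage continuous_subtype_val
  obtain ⟨n₀, hn₀⟩ := nonempty_interior_of_iUnion_of_closed hclosed_n hUnion
  obtain ⟨xs, hxsint⟩ := hn₀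
  rw [mem_interior_iff_mem_nhds, mem_nhds_subtype] at hxsint
  obtain ⟨U, hU, hUsub⟩ := hxsint
  obtain ⟨ρ, hρ, hball⟩ := Metric.mem_nhds_iff.mp hU
  have hbound : ∀ x, |x - xs.val| < ρ → ¬ ContinuousAt p x → |p x| ≤ (n₀:ℝ) := by
    intro x hx hd
    have hxD : x ∈ D := hd
    have hxU : x ∈ U := hball (by rwa [Metric.mem_ball, Real.dist_eq])
    exact hUsub (show (⟨x, hxD⟩ : D) ∈ Subtype.val ⁻¹' U from hxU)
  have hdx : ¬ ContinuousAt p xs.val := xs.2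
  -- unboundedness near xs
  have hnb : ∀ δ > (0:ℝ), ∀ M : ℝ, ∃ y, |y - xs.val| < δ ∧ y ≠ xs.val ∧ M < |p y| := by
    intro δ hδ M
    by_contra hcon
    push_neg at hcon
    apply hdx
    refine contAt_of_locBdd hgraph hδ (n := max M |p xs.val|) ?_
    intro y hy
    by_cases hyx : y = xs.val
    · rw [hyx]; exact le_max_right _ _
    · exact le_trans (hcon y hy hyx) (le_max_left _ _)
  -- the four directional cases
  by_cases P1 : ∀ δ > (0:ℝ), ∀ M : ℝ, ∃ y, xs.val < y ∧ y < xs.val + δ ∧ M < p y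
  · refine hnc (finalPiece (n₀ := (n₀:ℝ)) hgraph hcomp hρ ?_ P1)
    intro x h1 h2 hd
    exact hbound x (abs_lt.mpr ⟨by linarith, by linarith⟩) hd
  by_cases P2 : ∀ δ > (0:ℝ), ∀ M : ℝ, ∃ y, xs.val < y ∧ y < xs.val + δ ∧ M < -p y
  · refine hnc (hf2const (finalPiece (q := fun x => -p x) (n₀ := (n₀:ℝ)) hg2 hcomp2 hρ ?_ P2))
    intro x h1 h2 hd
    have hdp : ¬ ContinuousAt p x := fun hc => hd hc.neg
    have := hbound x (abs_lt.mpr ⟨by linarith, by linarith⟩) hdp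
    simpa [abs_neg] using this
  by_cases P3 : ∀ δ > (0:ℝ), ∀ M : ℝ, ∃ y, -xs.val < y ∧ y < -xs.val + δ ∧ M < p (-y)
  · refine hnc (finalPiece (q := fun x => p (-x)) (n₀ := (n₀:ℝ)) hg3 hcomp3 hρ (x₀ := -xs.val) ?_ P3)
    intro x h1 h2 hd
    have hdp : ¬ ContinuousAt p (-x) := by
      intro hc
      exact hd (hc.comp continuous_neg.continuousAt)
    exact hbound (-x) (abs_lt.mpr ⟨by linarith, by linarith⟩) hdp
  by_cases P4 : ∀ δ > (0:ℝ), ∀ M : ℝ, ∃ y, -xs.val < y ∧ y < -xs.val + δ ∧ M < -p (-y)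
  · refine hnc (hf2const (finalPiece (q := fun x => -p (-x)) (n₀ := (n₀:ℝ)) hg4 hcomp4 hρ (x₀ := -xs.val) ?_ P4))
    intro x h1 h2 hd
    have hdp : ¬ ContinuousAt p (-x) := by
      intro hc
      exact hd ((hc.comp continuous_neg.continuousAt).neg)
    have := hbound (-x) (abs_lt.mpr ⟨by linarith, by linarith⟩) hdp
    simpa [abs_neg] using this
  -- all four fail: p is bounded near xs, contradiction
  push_neg at P1 P2 P3 P4
  obtain ⟨δ₁, hδ₁, M₁, hM₁⟩ := P1
  obtain ⟨δ₂, hδ₂, M₂, hM₂⟩ := P2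
  obtain ⟨δ₃, hδ₃, M₃, hM₃⟩ := P3
  obtain ⟨δ₄, hδ₄, M₄, hM₄⟩ := P4
  set δ := min (min δ₁ δ₂) (min δ₃ δ₄) with hδdef
  have hδpos : 0 < δ := lt_min (lt_min hδ₁ hδ₂) (lt_min hδ₃ hδ₄)
  set M := max (max M₁ M₂) (max M₃ M₄) with hMdef
  obtain ⟨y, hy1, hy2, hy3⟩ := hnb δ hδpos M
  have habs := abs_lt.mp hy1
  rcases lt_or_gt_of_ne hy2 with hlt | hgt
  · -- y < xs.val : use P3, P4 with -y
    have h1 : -xs.val < -y := by linarith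
    have hδ₃' : δ ≤ δ₃ := le_trans (min_le_right _ _) (min_le_left _ _)
    have hδ₄' : δ ≤ δ₄ := le_trans (min_le_right _ _) (min_le_right _ _)
    have h2 : -y < -xs.val + δ₃ := by linarith [habs.1]
    have h2' : -y < -xs.val + δ₄ := by linarith [habs.1]
    have hb3 : p (- -y) ≤ M₃ := hM₃ (-y) h1 h2
    have hb4 : -p (- -y) ≤ M₄ := hM₄ (-y) h1 h2'
    rw [neg_neg] at hb3 hb4
    have : |p y| ≤ max M₃ M₄ := abs_le.mpr ⟨by
      have := le_max_right M₃ M₄; linarith, le_trans hb3 (le_max_left _ _)⟩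
    have : |p y| ≤ M := le_trans this (le_max_right _ _)
    linarith
  · -- xs.val < y : use P1, P2
    have hδ₁' : δ ≤ δ₁ := le_trans (min_le_left _ _) (min_le_left _ _)
    have hδ₂' : δ ≤ δ₂ := le_trans (min_le_left _ _) (min_le_right _ _)
    have h2 : y < xs.val + δ₁ := by linarith [habs.2]
    have h2' : y < xs.val + δ₂ := by linarith [habs.2]
    have hb1 : p y ≤ M₁ := hM₁ y hgt h2
    have hb2 : -p y ≤ M₂ := hM₂ y hgt h2'
    have : |p y| ≤ max M₁ M₂ := abs_le.mpr ⟨by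
      have := le_max_right M₁ M₂; linarith, le_trans hb1 (le_max_left _ _)⟩
    have : |p y| ≤ M := le_trans this (le_max_left _ _)
    linarith
end

section
/- Let n ≥ 1, let p : ℝ → ℝ be continuous, and suppose there exists f ∈ Cⁿ(ℝ,ℝ) with f'(y₀) ≠ 0 for some y₀, such that for every c ∈ ℝ the composition x ↦ f(p(x)+c) is Cⁿ. Then p ∈ Cⁿ(ℝ,ℝ). -/
open Topology

/-!
Near `y₀ = q x₀` the map `f` has a `Cⁿ` local inverse `g` by the inverse function theorem,
and since `q` is continuous at `x₀`, `q = g ∘ (f ∘ q)` near `x₀`, a composition of `Cⁿ` maps.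
Apply this at each `x₀` to `q = p + c` with `c = y₀ - p x₀`, so that `q x₀ = y₀`.
-/

section

variable {𝕜 : Type*} [RCLike 𝕜]
  {E : Type*} [NormedAddCommGroup E] [NormedSpace 𝕜 E] [CompleteSpace E]
  {F : Type*} [NormedAddCommGroup F] [NormedSpace 𝕜 F]
  {G : Type*} [NormedAddCommGroup G] [NormedSpace 𝕜 G]
  {n : WithTop ℕ∞} {f : E → F} {f' : E ≃L[𝕜] F} {q : G → E} {x₀ : G}

theorem ContDiffAt.of_comp_of_hasFDerivAt_equiv (hf : ContDiffAt 𝕜 n f (q x₀))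
    (hf' : HasFDerivAt f (f' : E →L[𝕜] F) (q x₀)) (hn : n ≠ 0) (hq : ContinuousAt q x₀)
    (hfq : ContDiffAt 𝕜 n (f ∘ q) x₀) : ContDiffAt 𝕜 n q x₀ := by
  have hg : ContDiffAt 𝕜 n (hf.localInverse hf' hn) (f (q x₀)) := hf.to_localInverse hf' hn
  have hleft : ∀ᶠ y in 𝓝 (q x₀), hf.localInverse hf' hn (f y) = y :=
    (hf.hasStrictFDerivAt' hf' hn).eventually_left_inverse
  have hqeq : (hf.localInverse hf' hn ∘ f ∘ q) =ᶠ[𝓝 x₀] q := hq.eventually hleft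
  exact (hg.comp x₀ hfq).congr_of_eventuallyEq hqeq.symm

end

theorem ContDiffAt.of_comp_of_deriv_ne_zero {n : WithTop ℕ∞} {f q : ℝ → ℝ} {x₀ : ℝ}
    (hf : ContDiffAt ℝ n f (q x₀)) (hf' : deriv f (q x₀) ≠ 0) (hn : n ≠ 0)
    (hq : ContinuousAt q x₀) (hfq : ContDiffAt ℝ n (f ∘ q) x₀) : ContDiffAt ℝ n q x₀ :=
  hf.of_comp_of_hasFDerivAt_equiv
    ((hf.differentiableAt hn).hasDerivAt.hasFDerivAt_equiv hf') hn hq hfq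

theorem stmt_8 (n : ℕ∞) (hn : 1 ≤ n) (p : ℝ → ℝ) (hp : Continuous p)
    (h : ∃ (f : ℝ → ℝ) (y₀ : ℝ), ContDiff ℝ n f ∧ deriv f y₀ ≠ 0 ∧
      ∀ c : ℝ, ContDiff ℝ n fun x => f (p x + c)) :
    ContDiff ℝ n p := by
  obtain ⟨f, y₀, hf, hf', hcomp⟩ := h
  have hn₀ : (n : WithTop ℕ∞) ≠ 0 := by
    exact_mod_cast (zero_lt_one.trans_le hn).ne'
  refine contDiff_iff_contDiffAt.mpr fun x₀ => ?_
  set c := y₀ - p x₀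
  have hshift : p x₀ + c = y₀ := add_sub_cancel _ _
  have hpc : ContDiffAt ℝ n (fun x => p x + c) x₀ := by
    refine ContDiffAt.of_comp_of_deriv_ne_zero (f := f) ?_ ?_ hn₀
      (hp.add continuous_const).continuousAt (hcomp c).contDiffAt
    · exact hf.contDiffAt
    · rwa [hshift]
  simpa using hpc.sub (contDiffAt_const (c := c))
end

section
/- Let p : ℝ → ℝ, let 𝒜_p = {f ∈ C⁰(ℝ,ℝ) : f(p(·)+c) ∈ C⁰(ℝ,ℝ) for all c}, and let L be the common period group of 𝒜_p. If x ∈ ℝ, (xₙ) is a sequence with xₙ → x and p(xₙ) → y, then y − p(x) ∈ L. -/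
open Filter

theorem stmt_10 (p : ℝ → ℝ)
    (A : Set (ℝ → ℝ))
    (hA : A = {f | Continuous f ∧ ∀ c : ℝ, Continuous fun x => f (p x + c)})
    (L : Set ℝ)
    (hL : L = {d | ∀ f ∈ A, ∀ y : ℝ, f (y + d) = f y})
    (x y : ℝ) (u : ℕ → ℝ)
    (hu : Tendsto u atTop (nhds x))
    (hpu : Tendsto (fun n => p (u n)) atTop (nhds y)) :
    y - p x ∈ L := by
  subst hA hL
  intro f hf y'
  obtain ⟨hfc, hfp⟩ := hf
  set c := y' - p x with hc
  have h1 : Tendsto (fun n => f (p (u n) + c)) atTop (nhds (f (p x + c))) :=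
    ((hfp c).tendsto x).comp hu
  have h2 : Tendsto (fun n => f (p (u n) + c)) atTop (nhds (f (y + c))) :=
    (hfc.tendsto _).comp (hpu.add_const c)
  have := tendsto_nhds_unique h1 h2
  have e1 : p x + c = y' := by ring
  have e2 : y + c = y' + (y - p x) := by ring
  rw [e1, e2] at this
  exact this.symm
end

section
/- Let n be a nonnegative integer or ∞, and p : ℝ → ℝ with p ∉ Cⁿ(ℝ,ℝ). Define 𝒜_p = {f ∈ Cⁿ(ℝ,ℝ) : f(p(·)+c) ∈ Cⁿ(ℝ,ℝ) for all c ∈ ℝ}. Then either 𝒜_p consists exactly of the constant functions, or there exists d ≠ 0 such that 𝒜_p = {f ∈ Cⁿ(ℝ,ℝ) : f is d-periodic}. -/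
/-!
If `x_i → x` and `p x_i → s`, then `f (s + c) = f (p x + c)` for every `f ∈ 𝒜_p` and every `c`,
so `s - p x` is a common period of `𝒜_p`. Unless `𝒜_p` consists of constants, its group `T` of
common periods is not dense, hence `T = dℤ`.

If `d ≠ 0`, reducing `p` modulo `d` around `p x` gives a bounded function `q` whose cluster values
at `x` are `≡ p x (mod d)` and within `d / 2` of it, so `q` is continuous at `x`. A non-constant
`f₀ ∈ 𝒜_p` has a non-vanishing derivative somewhere, and the inverse function theorem applied to
`f₀ (q + c)` makes `q` of class `Cⁿ` at `x`; then `f (p + c) = f (q + c)` near `x` for every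
`d`-periodic `f`, which is therefore in `𝒜_p`.

If `d = 0`, the graph of `p` is closed. By Baire's theorem on the closed set where `p` is locally
unbounded, if that set is nonempty there is a point near which `p` takes all large positive (or all
large negative) values, which forces `f₀` to be constant. So `p` is continuous, and the argument
above shows `p ∈ Cⁿ`, which is excluded.
-/

open Filter Set Metric Topology
open AddSubgroup (zmultiples mem_zmultiples_iff)
open Function (Periodic)

def commonPeriods (A : Set (ℝ → ℝ)) : AddSubgroup ℝ where
  carrier := {τ | ∀ f ∈ A, Periodic f τ}
  zero_mem' _ _ _ := by simp
  add_mem' h₁ h₂ f hf := (h₁ f hf).add_period (h₂ f hf)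
  neg_mem' h f hf := (h f hf).neg

theorem Continuous.eq_of_dense_periods {f : ℝ → ℝ} (hf : Continuous f) {S : Set ℝ}
    (hS : Dense S) (hper : ∀ τ ∈ S, Periodic f τ) (a b : ℝ) : f a = f b := by
  have h : (fun τ => f (a + τ)) = fun _ => f a :=
    Continuous.ext_on hS (by fun_prop) continuous_const fun τ hτ => by
      simpa [add_comm] using hper τ hτ a
  simpa using (congrFun h (b - a)).symm

theorem exists_commonPeriods_eq_zmultiples {A : Set (ℝ → ℝ)} {f₀ : ℝ → ℝ}
    (hf₀ : Continuous f₀) (hf₀A : f₀ ∈ A) (hnc : ∃ a b, f₀ a ≠ f₀ b) :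
    ∃ d, 0 ≤ d ∧ commonPeriods A = zmultiples d := by
  rcases (commonPeriods A).dense_or_cyclic with hD | ⟨a, ha⟩
  · obtain ⟨a, b, hab⟩ := hnc
    exact (hab (hf₀.eq_of_dense_periods hD (fun τ hτ => hτ f₀ hf₀A) a b)).elim
  · refine ⟨|a|, abs_nonneg a, ?_⟩
    rw [ha, ← AddSubgroup.zmultiples_eq_closure]
    rcases abs_choice a with h | h <;> rw [h]
    rw [AddSubgroup.zmultiples_neg]

theorem eq_zero_of_mem_zmultiples_of_abs_lt {α : Type*} [Ring α] [LinearOrder α]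
    [IsStrictOrderedRing α] {d t : α} (ht : t ∈ zmultiples d) (hlt : |t| < |d|) : t = 0 := by
  obtain ⟨k, rfl⟩ := mem_zmultiples_iff.mp ht
  rw [zsmul_eq_mul] at hlt ⊢
  rw [abs_mul] at hlt
  have hk : |(k : α)| < 1 := by
    by_contra! h
    exact hlt.not_ge (le_mul_of_one_le_left (abs_nonneg d) h)
  have : k = 0 := by
    rw [← Int.cast_abs, ← Int.cast_one, Int.cast_lt, Int.abs_lt_one_iff] at hk
    exact hk
  simp [this]

theorem sub_mem_commonPeriods_of_mapClusterPt {p g : ℝ → ℝ} {A : Set (ℝ → ℝ)}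
    (hA : ∀ f ∈ A, Continuous f ∧ ∀ c, Continuous fun x => f (p x + c)) {x s : ℝ}
    (hg : ∀ᶠ y in 𝓝 x, g y - p y ∈ commonPeriods A) (hs : MapClusterPt s (𝓝 x) g) :
    s - p x ∈ commonPeriods A := by
  intro f hf z
  have hlim : Tendsto (fun y => f (g y + (z - p x))) (𝓝 x) (𝓝 (f (p x + (z - p x)))) := by
    refine ((hA f hf).2 _).continuousAt.tendsto.congr' ?_
    filter_upwards [hg] with y hy
    rw [show g y + (z - p x) = p y + (z - p x) + (g y - p y) by ring]
    exact (hy f hf _).symm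
  have hclu := hs.continuousAt_comp (f := fun t => f (t + (z - p x)))
    ((hA f hf).1.comp (continuous_add_const _)).continuousAt
  have heq := eq_of_nhds_neBot (hclu.clusterPt.mono (map_le_iff_le_comap.mpr hlim.le_comap) :)
  convert heq using 2 <;> ring

theorem Function.Periodic.eventuallyEq_comp_add {g p q : ℝ → ℝ} {d : ℝ} {l : Filter ℝ}
    (hg : Periodic g d) (h : ∀ᶠ y in l, q y - p y ∈ zmultiples d) (c : ℝ) :
    (fun y => g (p y + c)) =ᶠ[l] fun y => g (q y + c) := by
  filter_upwards [h] with y hy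
  obtain ⟨k, hk⟩ := mem_zmultiples_iff.mp hy
  rw [show q y + c = p y + c + k • d by rw [hk]; ring]
  exact ((hg.zsmul k) _).symm

theorem continuousAt_toIcoMod_comp {p : ℝ → ℝ} {A : Set (ℝ → ℝ)}
    (hA : ∀ f ∈ A, Continuous f ∧ ∀ c, Continuous fun x => f (p x + c)) {d : ℝ} (hd : 0 < d)
    (hT : commonPeriods A = zmultiples d) (x : ℝ) :
    ContinuousAt (fun y => toIcoMod hd (p x - d / 2) (p y)) x := by
  have hx : toIcoMod hd (p x - d / 2) (p x) = p x :=
    (toIcoMod_eq_self hd).2 ⟨by linarith, by linarith⟩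
  show Tendsto _ _ (𝓝 (toIcoMod hd (p x - d / 2) (p x)))
  rw [hx]
  refine (isCompact_Icc (a := p x - d / 2) (b := p x + d / 2)).tendsto_nhds_of_unique_mapClusterPt
    (.of_forall fun y => ?_) fun s hs hcl => ?_
  · have := toIcoMod_mem_Ico hd (p x - d / 2) (p y)
    exact ⟨this.1, by linarith [this.2]⟩
  · have hmem : s - p x ∈ zmultiples d := hT ▸ sub_mem_commonPeriods_of_mapClusterPt hA
      (.of_forall fun y => hT ▸ mem_zmultiples_iff.mpr ⟨_, (toIcoMod_sub_self hd _ _).symm⟩) hcl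
    have := eq_zero_of_mem_zmultiples_of_abs_lt hmem (by
      rw [abs_of_pos hd, abs_lt]; constructor <;> linarith [hs.1, hs.2])
    linarith

/-- Equivalently, the graph of `p` is closed in `ℝ × ℝ`. -/
def ClosedGraph (p : ℝ → ℝ) : Prop :=
  ∀ x s, MapClusterPt s (𝓝 x) p → s = p x

theorem closedGraph_of_commonPeriods_eq_bot {p : ℝ → ℝ} {A : Set (ℝ → ℝ)}
    (hA : ∀ f ∈ A, Continuous f ∧ ∀ c, Continuous fun x => f (p x + c))
    (hT : commonPeriods A = ⊥) : ClosedGraph p := fun x s hs => by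
  have := sub_mem_commonPeriods_of_mapClusterPt hA (.of_forall fun y => by simp) hs
  rwa [hT, AddSubgroup.mem_bot, sub_eq_zero] at this

namespace ClosedGraph

variable {p : ℝ → ℝ}

theorem neg (hp : ClosedGraph p) : ClosedGraph fun x => -p x := fun x s hs => by
  have := hp x (-s) (by simpa [Function.comp_def] using hs.continuousAt_comp continuousAt_neg)
  linarith

theorem comp_neg (hp : ClosedGraph p) : ClosedGraph fun x => p (-x) := fun x s hs =>
  hp (-x) s (hs.of_comp continuousAt_neg)

theorem mem_of_eventually_mem (hp : ClosedGraph p) {l : Filter ℝ} [l.NeBot] {x : ℝ}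
    (hl : l ≤ 𝓝 x) {K : Set ℝ} (hK : IsCompact K) (h : ∀ᶠ y in l, p y ∈ K) : p x ∈ K := by
  obtain ⟨s, hsK, hs⟩ := hK.exists_mapClusterPt (u := p) (le_principal_iff.mpr h)
  exact hp x s (hs.mono hl) ▸ hsK

theorem continuousAt (hp : ClosedGraph p) {x : ℝ}
    (hb : IsBoundedUnder (· ≤ ·) (𝓝 x) fun y => |p y|) : ContinuousAt p x := by
  obtain ⟨B, hB⟩ := hb
  exact (isCompact_Icc (a := -B) (b := B)).tendsto_nhds_of_unique_mapClusterPt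
    ((eventually_map.mp hB).mono fun y hy => abs_le.mp hy) fun s _ hs => hp x s hs

theorem isClosed_abs_le (hp : ClosedGraph p) (M : ℝ) : IsClosed {x | |p x| ≤ M} := by
  refine isClosed_of_closure_subset fun x hx => ?_
  have := mem_closure_iff_nhdsWithin_neBot.mp hx
  exact abs_le.mpr (hp.mem_of_eventually_mem (l := 𝓝[{x | |p x| ≤ M}] x) nhdsWithin_le_nhds
    isCompact_Icc (eventually_nhdsWithin_of_forall fun y hy => abs_le.mp hy))

end ClosedGraph

theorem isClosed_setOf_not_isBoundedUnder {X : Type*} [TopologicalSpace X] (g : X → ℝ) :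
    IsClosed {x | ¬ IsBoundedUnder (· ≤ ·) (𝓝 x) g} := by
  rw [← isOpen_compl_iff]
  convert isOpen_iUnion fun b => isOpen_setOfPred_eventually_nhds (p := fun y => g y ≤ b) using 1
  ext x
  simp [IsBoundedUnder, IsBounded]

theorem IsClosed.exists_ball_le {X : Type*} [MetricSpace X] [CompleteSpace X] {C : Set X}
    (hC : IsClosed C) (hne : C.Nonempty) {g : X → ℝ} (hg : ∀ M, IsClosed {x | g x ≤ M}) :
    ∃ z ∈ C, ∃ r > 0, ∃ M, ∀ x ∈ C, x ∈ ball z r → g x ≤ M := by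
  have := hC.completeSpace_coe
  have := hne.to_subtype
  obtain ⟨M, z, hz⟩ := nonempty_interior_of_iUnion_of_closed
    (f := fun M : ℕ => {x : C | g x ≤ M}) (fun M => (hg M).preimage continuous_subtype_val)
    (eq_univ_of_forall fun x => mem_iUnion.mpr (exists_nat_ge (g x)))
  obtain ⟨r, hr, hball⟩ := Metric.isOpen_iff.mp isOpen_interior z hz
  refine ⟨z, z.2, r, hr, M, fun x hx hxz => ?_⟩
  exact interior_subset (s := {x : C | g x ≤ M}) (hball (show (⟨x, hx⟩ : C) ∈ ball z r from hxz))

def Sweeps (l : Filter ℝ) (p : ℝ → ℝ) (w : ℝ) : Prop :=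
  ∀ U ∈ 𝓝 w, p '' U ∈ l

namespace Sweeps

variable {p : ℝ → ℝ} {w : ℝ}

theorem of_neg (h : Sweeps atTop (fun x => -p x) w) : Sweeps atBot p w := fun U hU => by
  refine mem_of_superset (tendsto_neg_atBot_atTop (h U hU)) ?_
  rintro s ⟨x, hx, hxs⟩
  exact ⟨x, hx, neg_inj.mp hxs⟩

theorem of_comp_neg {l : Filter ℝ} (h : Sweeps l (fun x => p (-x)) w) : Sweeps l p (-w) :=
  fun U hU => by
    refine mem_of_superset (h _ (continuousAt_neg.preimage_mem_nhds hU)) ?_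
    rintro s ⟨x, hx, rfl⟩
    exact ⟨-x, hx, rfl⟩

theorem eq_of_continuousAt {l : Filter ℝ} [l.NeBot] (hl : ∀ c, Tendsto (· + c) l l)
    (hs : Sweeps l p w) {f : ℝ → ℝ} (hf : ∀ c, ContinuousAt (fun x => f (p x + c)) w)
    (a b : ℝ) : f a = f b := by
  have hlim : ∀ c, Tendsto (fun t => f (t + c)) l (𝓝 (f (p w + c))) := fun c =>
    tendsto_def.mpr fun V hV =>
      mem_of_superset (hs _ (hf c hV)) (image_subset_iff.mpr fun _ hx => hx)
  have hconst : ∀ c, f (p w + c) = f (p w) := fun c =>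
    tendsto_nhds_unique (hlim c) (by simpa [Function.comp_def] using (hlim 0).comp (hl c))
  rw [← add_sub_cancel (p w) a, ← add_sub_cancel (p w) b, hconst, hconst]

end Sweeps

theorem exists_lt_of_not_isBoundedUnder_nhdsGT {p : ℝ → ℝ} {z : ℝ}
    (h : ¬ IsBoundedUnder (· ≤ ·) (𝓝[>] z) p) {b : ℝ} (hb : z < b) (K : ℝ) :
    ∃ y ∈ Ioo z b, K < p y := by
  by_contra! hK
  exact h ⟨K, eventually_map.mpr (mem_of_superset (Ioo_mem_nhdsGT hb) hK)⟩

theorem sweeps_atTop_of_continuousOn_Ioc {p : ℝ → ℝ} {z y : ℝ} (hzy : z < y)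
    (hc : ContinuousOn p (Ioc z y)) (hunb : ¬ IsBoundedUnder (· ≤ ·) (𝓝[>] z) p) :
    Sweeps atTop p z := by
  intro U hU
  obtain ⟨ε, hε, hεU⟩ := Metric.mem_nhds_iff.mp hU
  obtain ⟨x₁, hx₁⟩ : ∃ x₁, z < x₁ ∧ x₁ ≤ y ∧ x₁ < z + ε := by
    refine ⟨z + min ε (y - z) / 2, ?_, ?_, ?_⟩ <;>
      linarith [min_le_left ε (y - z), min_le_right ε (y - z), lt_min hε (sub_pos.mpr hzy)]
  filter_upwards [Ici_mem_atTop (p x₁)] with s hs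
  obtain ⟨x₂, hx₂, hsx₂⟩ := exists_lt_of_not_isBoundedUnder_nhdsGT hunb hx₁.1 s
  obtain ⟨t, ht, rfl⟩ := intermediate_value_Icc' hx₂.2.le
    (hc.mono (Icc_subset_Ioc hx₂.1 hx₁.2.1)) ⟨hs, hsx₂.le⟩
  refine ⟨t, hεU ?_, rfl⟩
  rw [mem_ball, Real.dist_eq, abs_lt]
  constructor <;> linarith [hx₂.1, ht.1, ht.2]

namespace ClosedGraph

variable {p : ℝ → ℝ} {z₀ r M : ℝ}

-- With `z` the last point of `[z₀, y]` where `|p| ≤ M`, `p` is continuous on `(z, y]`: either it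
-- comes down to `M + 1` there and the intermediate value theorem covers `[M + 1, p y]`, or it
-- stays above `M + 1`, is then unbounded at `z⁺` by the closed graph, and sweeps at `z`.
theorem Icc_subset_image_Ioc_or_exists_sweeps (hp : ClosedGraph p) {y : ℝ} (hz₀y : z₀ < y)
    (hz₀ : |p z₀| ≤ M) (hcont : ∀ x ∈ Ioc z₀ y, M < |p x| → ContinuousAt p x)
    (hpy : M + 1 < p y) : Icc (M + 1) (p y) ⊆ p '' Ioc z₀ y ∨ ∃ w, Sweeps atTop p w := by
  set C := {x | |p x| ≤ M} ∩ Icc z₀ y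
  have hCbdd : BddAbove C := bddAbove_Icc.mono inter_subset_right
  have hzC : sSup C ∈ C :=
    ((hp.isClosed_abs_le M).inter isClosed_Icc).csSup_mem ⟨z₀, hz₀, le_rfl, hz₀y.le⟩ hCbdd
  set z := sSup C
  obtain ⟨hpz, hz₀z, hzy'⟩ : |p z| ≤ M ∧ z₀ ≤ z ∧ z ≤ y := hzC
  have hzy : z < y := hzy'.lt_of_ne fun h => by
    rw [h] at hpz; linarith [le_abs_self (p y)]
  have hgap : ∀ x ∈ Ioc z y, M < |p x| := fun x hx => not_le.mp fun hxM =>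
    hx.1.not_ge (le_csSup hCbdd ⟨hxM, hz₀z.trans hx.1.le, hx.2⟩)
  have hcz : ContinuousOn p (Ioc z y) := fun x hx =>
    (hcont x ⟨hz₀z.trans_lt hx.1, hx.2⟩ (hgap x hx)).continuousWithinAt
  by_cases hlow : ∃ x ∈ Ioc z y, p x ≤ M + 1
  · obtain ⟨x, hx, hpx⟩ := hlow
    refine .inl fun s hs => ?_
    obtain ⟨t, ht, hts⟩ := intermediate_value_Icc hx.2 (hcz.mono (Icc_subset_Ioc hx.1 le_rfl))
      ⟨hpx.trans hs.1, hs.2⟩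
    exact ⟨t, ⟨hz₀z.trans_lt (hx.1.trans_le ht.1), ht.2⟩, hts⟩
  · push Not at hlow
    refine .inr ⟨z, sweeps_atTop_of_continuousOn_Ioc hzy hcz fun ⟨B, hB⟩ => ?_⟩
    have hzK := hp.mem_of_eventually_mem nhdsWithin_le_nhds
      (isCompact_Icc (a := M + 1) (b := B)) ((eventually_map.mp hB).and
        (mem_of_superset (Ioo_mem_nhdsGT hzy) fun x hx => (hlow x (Ioo_subset_Ioc_self hx)).le)
        |>.mono fun x hx => ⟨hx.2, hx.1⟩)
    linarith [hzK.1, le_abs_self (p z)]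

theorem exists_sweeps_atTop_of_nhdsGT (hp : ClosedGraph p) (hr : 0 < r) (hz₀ : |p z₀| ≤ M)
    (hcont : ∀ x ∈ ball z₀ r, M < |p x| → ContinuousAt p x)
    (hunb : ¬ IsBoundedUnder (· ≤ ·) (𝓝[>] z₀) p) : ∃ w, Sweeps atTop p w := by
  by_contra! hno
  refine hno z₀ fun U hU => ?_
  obtain ⟨ε, hε, hεU⟩ := Metric.mem_nhds_iff.mp hU
  filter_upwards [Ici_mem_atTop (M + 1)] with s hs
  obtain ⟨y, hy, hsy⟩ := exists_lt_of_not_isBoundedUnder_nhdsGT hunb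
    (lt_add_of_pos_right z₀ (lt_min hε hr)) (max s (M + 1))
  have hball : ∀ x ∈ Ioc z₀ y, x ∈ ball z₀ (min ε r) := fun x hx => by
    rw [mem_ball, Real.dist_eq, abs_lt]
    constructor <;> linarith [hx.1, hx.2, hy.2]
  obtain h | ⟨w, hw⟩ := hp.Icc_subset_image_Ioc_or_exists_sweeps hy.1 hz₀
    (fun x hx => hcont x (ball_subset_ball (min_le_right ε r) (hball x hx)))
    ((le_max_right _ _).trans_lt hsy)
  · obtain ⟨x, hx, hxs⟩ := h ⟨hs, (le_max_left _ _).trans hsy.le⟩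
    exact ⟨x, hεU (ball_subset_ball (min_le_left ε r) (hball x hx)), hxs⟩
  · exact (hno w hw).elim

theorem exists_sweeps_of_nhdsGT (hp : ClosedGraph p) (hr : 0 < r) (hz₀ : |p z₀| ≤ M)
    (hcont : ∀ x ∈ ball z₀ r, M < |p x| → ContinuousAt p x)
    (hunb : ¬ IsBoundedUnder (· ≤ ·) (𝓝[>] z₀) fun x => |p x|) :
    ∃ w, Sweeps atTop p w ∨ Sweeps atBot p w := by
  rw [isBoundedUnder_le_abs, not_and_or] at hunb
  rcases hunb with hunb | hunb
  · obtain ⟨w, hw⟩ := hp.exists_sweeps_atTop_of_nhdsGT hr hz₀ hcont hunb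
    exact ⟨w, .inl hw⟩
  · obtain ⟨w, hw⟩ := hp.neg.exists_sweeps_atTop_of_nhdsGT hr (by simpa using hz₀)
      (fun x hx hMx => (hcont x hx (by simpa using hMx)).neg) (by rwa [isBoundedUnder_le_neg])
    exact ⟨w, .inr hw.of_neg⟩

theorem exists_sweeps (hp : ClosedGraph p) (hr : 0 < r) (hz₀ : |p z₀| ≤ M)
    (hcont : ∀ x ∈ ball z₀ r, M < |p x| → ContinuousAt p x)
    (hunb : ¬ IsBoundedUnder (· ≤ ·) (𝓝 z₀) fun x => |p x|) :
    ∃ w, Sweeps atTop p w ∨ Sweeps atBot p w := by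
  have hside : ¬ IsBoundedUnder (· ≤ ·) (𝓝[>] z₀) (fun x => |p x|) ∨
      ¬ IsBoundedUnder (· ≤ ·) (𝓝[<] z₀) (fun x => |p x|) := by
    by_contra! h
    apply hunb
    rw [IsBoundedUnder, ← nhdsNE_sup_pure, ← nhdsLT_sup_nhdsGT, map_sup, map_sup]
    exact isBounded_sup (isBounded_sup h.2 h.1) ⟨_, eventually_map.mpr (eventually_pure.mpr le_rfl)⟩
  rcases hside with h | h
  · exact hp.exists_sweeps_of_nhdsGT hr hz₀ hcont h
  · obtain ⟨w, hw⟩ := hp.comp_neg.exists_sweeps_of_nhdsGT (z₀ := -z₀) hr (by simpa using hz₀)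
      (fun x hx hMx =>
        (hcont (-x) (by rwa [mem_ball, dist_neg]) hMx).comp (f := Neg.neg) continuousAt_neg)
      (by
        change ¬ IsBounded _ (map ((fun x => |p x|) ∘ Neg.neg) _)
        rwa [← map_map, Filter.map_neg, neg_nhdsGT, neg_neg])
    exact ⟨-w, hw.imp Sweeps.of_comp_neg Sweeps.of_comp_neg⟩

theorem continuous_or_exists_sweeps (hp : ClosedGraph p) :
    Continuous p ∨ ∃ w, Sweeps atTop p w ∨ Sweeps atBot p w := by
  refine or_iff_not_imp_left.mpr fun hc => ?_
  set Z := {x | ¬ IsBoundedUnder (· ≤ ·) (𝓝 x) fun y => |p y|}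
  have hZ : Z.Nonempty := by
    obtain ⟨x, hx⟩ := not_forall.mp (mt continuous_iff_continuousAt.mpr hc)
    exact ⟨x, fun hb => hx (hp.continuousAt hb)⟩
  obtain ⟨z₀, hz₀, r, hr, M, hM⟩ :=
    (isClosed_setOf_not_isBoundedUnder _).exists_ball_le hZ hp.isClosed_abs_le
  exact hp.exists_sweeps hr (hM z₀ hz₀ (mem_ball_self hr))
    (fun x hx hMx => hp.continuousAt (not_not.mp fun hxZ => (hM x hxZ hx).not_gt hMx)) hz₀

end ClosedGraph

theorem ContDiffAt.of_comp_of_hasFDerivAt {𝕂 : Type*} [RCLike 𝕂] {E F G : Type*}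
    [NormedAddCommGroup E] [NormedSpace 𝕂 E] [CompleteSpace E] [NormedAddCommGroup F]
    [NormedSpace 𝕂 F] [NormedAddCommGroup G] [NormedSpace 𝕂 G] {n : WithTop ℕ∞} {f : E → F}
    {f' : E ≃L[𝕂] F} {r : G → E} {x : G} (hn : n ≠ 0) (hf : ContDiffAt 𝕂 n f (r x))
    (hf' : HasFDerivAt f (f' : E →L[𝕂] F) (r x)) (hr : ContinuousAt r x)
    (hfr : ContDiffAt 𝕂 n (f ∘ r) x) : ContDiffAt 𝕂 n r x := by
  have hinv := (hf.hasStrictFDerivAt' hf' hn).eventually_left_inverse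
  refine ((hf.to_localInverse hf' hn).comp x hfr).congr_of_eventuallyEq ?_
  filter_upwards [hr.eventually hinv] with y hy
  exact hy.symm

theorem contDiffAt_of_contDiffAt_comp_add {n : ℕ∞} (hn : n ≠ 0) {f r : ℝ → ℝ}
    (hf : ContDiff ℝ n f) (hnc : ∃ a b, f a ≠ f b) {x : ℝ} (hr : ContinuousAt r x)
    (hfr : ∀ c, ContDiffAt ℝ n (fun y => f (r y + c)) x) : ContDiffAt ℝ n r x := by
  have hn' : (n : WithTop ℕ∞) ≠ 0 := by exact_mod_cast hn
  obtain ⟨a, ha⟩ : ∃ a, deriv f a ≠ 0 := by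
    by_contra! h
    obtain ⟨b, b', hb⟩ := hnc
    exact hb (is_const_of_deriv_eq_zero (hf.differentiable hn') h b b')
  obtain ⟨L, hL⟩ : ∃ L : ℝ ≃L[ℝ] ℝ, HasFDerivAt f (L : ℝ →L[ℝ] ℝ) a :=
    ⟨_, (hf.differentiable hn' a).hasDerivAt.hasFDerivAt_equiv ha⟩
  rw [← add_sub_cancel (r x) a] at hL
  simpa using (ContDiffAt.of_comp_of_hasFDerivAt (r := fun y => r y + (a - r x)) hn'
    hf.contDiffAt hL (hr.add continuousAt_const) (hfr _)).sub (contDiffAt_const (c := a - r x))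

theorem contDiff_comp_add_of_periodic {n : ℕ∞} {p f₀ g : ℝ → ℝ} {d : ℝ}
    (hf₀ : ContDiff ℝ n f₀) (hnc : ∃ a b, f₀ a ≠ f₀ b) (hf₀d : Periodic f₀ d)
    (hf₀p : ∀ c, ContDiff ℝ n fun x => f₀ (p x + c))
    (hloc : ∀ x, ∃ q, ContinuousAt q x ∧ ∀ᶠ y in 𝓝 x, q y - p y ∈ zmultiples d)
    (hg : ContDiff ℝ n g) (hgd : Periodic g d) (c : ℝ) : ContDiff ℝ n fun x => g (p x + c) := by
  rcases eq_or_ne n 0 with rfl | hn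
  · rw [WithTop.coe_zero, contDiff_zero] at hg ⊢
    refine continuous_iff_continuousAt.mpr fun x => ?_
    obtain ⟨q, hq, hqp⟩ := hloc x
    exact (hg.continuousAt.comp (hq.add continuousAt_const)).congr
      (hgd.eventuallyEq_comp_add hqp c).symm
  · refine contDiff_iff_contDiffAt.mpr fun x => ?_
    obtain ⟨q, hq, hqp⟩ := hloc x
    have hqn : ContDiffAt ℝ n q x := contDiffAt_of_contDiffAt_comp_add hn hf₀ hnc hq fun c' =>
      (hf₀p c').contDiffAt.congr_of_eventuallyEq (hf₀d.eventuallyEq_comp_add hqp c').symm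
    exact (hg.contDiffAt.comp x (hqn.add contDiffAt_const)).congr_of_eventuallyEq
      (hgd.eventuallyEq_comp_add hqp c)

theorem exists_continuousAt_sub_mem_zmultiples {p f₀ : ℝ → ℝ} {A : Set (ℝ → ℝ)}
    (hA : ∀ f ∈ A, Continuous f ∧ ∀ c, Continuous fun x => f (p x + c)) (hf₀ : f₀ ∈ A)
    (hnc : ∃ a b, f₀ a ≠ f₀ b) {d : ℝ} (hd : 0 ≤ d) (hT : commonPeriods A = zmultiples d)
    (x : ℝ) : ∃ q, ContinuousAt q x ∧ ∀ᶠ y in 𝓝 x, q y - p y ∈ zmultiples d := by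
  rcases hd.eq_or_lt with rfl | hd
  · refine ⟨p, ?_, .of_forall fun y => by simp⟩
    rw [AddSubgroup.zmultiples_zero_eq_bot] at hT
    obtain ⟨a, b, hab⟩ := hnc
    have hf₀c : ∀ c w, ContinuousAt (fun x => f₀ (p x + c)) w := fun c w =>
      ((hA f₀ hf₀).2 c).continuousAt
    rcases (closedGraph_of_commonPeriods_eq_bot hA hT).continuous_or_exists_sweeps with
      hc | ⟨w, hw | hw⟩
    · exact hc.continuousAt
    · exact (hab (hw.eq_of_continuousAt (fun c => tendsto_atTop_add_const_right _ c tendsto_id)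
        (fun c => hf₀c c w) a b)).elim
    · exact (hab (hw.eq_of_continuousAt (fun c => tendsto_atBot_add_const_right _ c tendsto_id)
        (fun c => hf₀c c w) a b)).elim
  · exact ⟨_, continuousAt_toIcoMod_comp hA hd hT x,
      .of_forall fun y => mem_zmultiples_iff.mpr ⟨_, (toIcoMod_sub_self hd _ _).symm⟩⟩

theorem stmt_16 (n : ℕ∞) (p : ℝ → ℝ) (hp : ¬ ContDiff ℝ n p)
    (A : Set (ℝ → ℝ))
    (hA : A = {f | ContDiff ℝ n f ∧ ∀ c : ℝ, ContDiff ℝ n fun x => f (p x + c)}) :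
    A = {f | ∃ k : ℝ, f = fun _ => k} ∨
      ∃ d : ℝ, d ≠ 0 ∧ A = {f | ContDiff ℝ n f ∧ Function.Periodic f d} := by
  have hmem : ∀ f, f ∈ A ↔ ContDiff ℝ n f ∧ ∀ c : ℝ, ContDiff ℝ n fun x => f (p x + c) :=
    fun f => by rw [hA]; rfl
  by_cases hconst : ∀ f ∈ A, ∀ a b, f a = f b
  · refine .inl (Set.ext fun f => ⟨fun hf => ⟨f 0, funext fun x => hconst f hf x 0⟩, ?_⟩)
    rintro ⟨k, rfl⟩
    exact (hmem _).mpr ⟨contDiff_const, fun _ => contDiff_const⟩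
  push Not at hconst
  obtain ⟨f₀, hf₀A, hnc⟩ := hconst
  have hf₀ := (hmem f₀).mp hf₀A
  have hAc : ∀ f ∈ A, Continuous f ∧ ∀ c, Continuous fun x => f (p x + c) := fun f hf =>
    ⟨((hmem f).mp hf).1.continuous, fun c => (((hmem f).mp hf).2 c).continuous⟩
  obtain ⟨d, hd, hT⟩ := exists_commonPeriods_eq_zmultiples hf₀.1.continuous hf₀A hnc
  have hper : ∀ f ∈ A, Periodic f d := (hT ▸ AddSubgroup.mem_zmultiples d : d ∈ commonPeriods A)
  have hcomp : ∀ g, ContDiff ℝ n g → Periodic g d → ∀ c, ContDiff ℝ n fun x => g (p x + c) :=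
    fun g hg hgd => contDiff_comp_add_of_periodic hf₀.1 hnc (hper f₀ hf₀A) hf₀.2
      (exists_continuousAt_sub_mem_zmultiples hAc hf₀A hnc hd hT) hg hgd
  refine .inr ⟨d, fun hd0 => hp ?_, Set.ext fun f => ?_⟩
  · simpa using hcomp id contDiff_id (by simp [hd0]) 0
  · exact ⟨fun hf => ⟨((hmem f).mp hf).1, hper f hf⟩,
      fun hf => (hmem f).mpr ⟨hf.1, hcomp f hf.1 hf.2⟩⟩
end

section
/- Let n be a nonnegative integer or ∞, and let p = χ_E be the characteristic function of a set E ⊆ ℝ with E ≠ ∅ and E ≠ ℝ. Define 𝒜_p = {f ∈ Cⁿ(ℝ,ℝ) : f(p(·)+c) ∈ Cⁿ(ℝ,ℝ) for all c ∈ ℝ}. Then 𝒜_p = C¹ₙ, the set of 1-periodic Cⁿ functions; in particular sin(2πx) and cos(2πx) belong to 𝒜_p. -/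
theorem stmt_17 (n : ℕ∞) (E : Set ℝ) (hE₁ : E ≠ ∅) (hE₂ : E ≠ Set.univ)
    (p : ℝ → ℝ) (hp : p = E.indicator fun _ => 1)
    (A : Set (ℝ → ℝ))
    (hA : A = {f | ContDiff ℝ n f ∧ ∀ c : ℝ, ContDiff ℝ n fun x => f (p x + c)}) :
    A = {f | ContDiff ℝ n f ∧ Function.Periodic f 1} ∧
      (fun x => Real.sin (2 * Real.pi * x)) ∈ A ∧
      (fun x => Real.cos (2 * Real.pi * x)) ∈ A := by
  obtain ⟨x₀, hx₀⟩ := Set.nonempty_iff_ne_empty.mpr hE₁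
  obtain ⟨x₁, hx₁⟩ : ∃ x₁, x₁ ∉ E := by
    by_contra h; push_neg at h; exact hE₂ (Set.eq_univ_of_forall h)
  have hp0 : ∀ x, x ∉ E → p x = 0 := by
    intro x hx; simp [hp, Set.indicator_of_notMem hx]
  have hp1 : ∀ x, x ∈ E → p x = 1 := by
    intro x hx; simp [hp, Set.indicator_of_mem hx]
  have key : A = {f | ContDiff ℝ n f ∧ Function.Periodic f 1} := by
    subst hA
    ext f
    simp only [Set.mem_setOf_eq]
    constructor
    · rintro ⟨hf, hc⟩
      refine ⟨hf, fun c => ?_⟩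
      by_contra hne
      set g := fun x => f (p x + c) with hg
      have hgc : Continuous g := (hc c).continuous
      have hg0 : g x₁ = f c := by simp [hg, hp0 x₁ hx₁]
      have hg1 : g x₀ = f (c + 1) := by simp [hg, hp1 x₀ hx₀, add_comm]
      have hrange : ∀ x, g x = f c ∨ g x = f (c + 1) := by
        intro x
        by_cases hx : x ∈ E
        · right; simp [hg, hp1 x hx, add_comm]
        · left; simp [hg, hp0 x hx]
      set m := (f c + f (c + 1)) / 2 with hm
      have hmem : m ∈ Set.range g := by
        rcases le_total (f c) (f (c + 1)) with h | h
        · exact intermediate_value_univ x₁ x₀ hgc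
            (by rw [hg0, hg1]; constructor <;> [skip; skip] <;> simp [hm] <;> linarith)
        · exact intermediate_value_univ x₀ x₁ hgc
            (by rw [hg0, hg1]; constructor <;> [skip; skip] <;> simp [hm] <;> linarith)
      obtain ⟨x, hx⟩ := hmem
      rcases hrange x with h | h <;> rw [hx] at h <;> simp [hm] at h <;> exact hne (by linarith)
    · rintro ⟨hf, hper⟩
      refine ⟨hf, fun c => ?_⟩
      have : (fun x => f (p x + c)) = fun _ => f c := by
        funext x
        by_cases hx : x ∈ E
        · rw [hp1 x hx, show (1:ℝ) + c = c + 1 by ring]; exact hper c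
        · rw [hp0 x hx]; simp
      rw [this]; exact contDiff_const
  refine ⟨key, ?_, ?_⟩ <;> rw [key]
  · refine ⟨(Real.contDiff_sin.comp ((contDiff_const.mul contDiff_id))).of_le le_top, fun x => ?_⟩
    simp only [mul_add, mul_one]
    exact Real.sin_add_two_pi _
  · refine ⟨(Real.contDiff_cos.comp ((contDiff_const.mul contDiff_id))).of_le le_top, fun x => ?_⟩
    simp only [mul_add, mul_one]
    exact Real.cos_add_two_pi _
end
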